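/- Let L > 0 and let φ_L be the truncated mean curvature function (φ_L(t) = 1/√(1+t) on [0,L], φ_L(t) = x_L(t−L−1)²+y_L on [L,L+1], φ_L(t) = y_L for t ≥ L+1, with x_L = √(1+L)/(4(1+L)²), y_L = (4L+3)x_L). Then the map t ↦ φ_L(t²)·t is strictly increasing on (0,∞). -/

import Mathlib

/-!
Since `φ_L > 0`, the map `t ↦ φ_L(t²) t` is the square root of `G(t²)` with `G(u) = φ_L(u)² u`,
so it suffices that `G` is strictly increasing on `[0, ∞)`. On `[0, L]`, `G(u) = u / (1 + u)`;
on `[L, L + 1]`, `G(u) = x_L² ((u - L - 1)² + 4L + 3)² u`, whose derivative is positive;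
on `[L + 1, ∞)`, `G(u) = y_L² u`. The three pieces glue because `x_L` is chosen so that
`φ_L` is continuous at `L`.
-/

noncomputable def xL (L : ℝ) : ℝ := Real.sqrt (1 + L) / (4 * (1 + L) ^ 2)

noncomputable def yL (L : ℝ) : ℝ := (4 * L + 3) * xL L

noncomputable def phiL (L : ℝ) (t : ℝ) : ℝ :=
  if t ≤ L then 1 / Real.sqrt (1 + t)
  else if t ≤ L + 1 then xL L * (t - L - 1) ^ 2 + yL L
  else yL L

open Set

variable {L : ℝ}

lemma xL_pos (hL : -1 < L) : 0 < xL L := by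
  have : 0 < 1 + L := by linarith
  unfold xL
  positivity

lemma yL_pos (hL : -3 / 4 < L) : 0 < yL L :=
  mul_pos (by linarith) (xL_pos (by linarith))

lemma phiL_of_le {t : ℝ} (ht : t ≤ L) : phiL L t = 1 / √(1 + t) := if_pos ht

lemma phiL_of_le_of_lt {t : ℝ} (ht : L < t) (ht' : t ≤ L + 1) :
    phiL L t = xL L * (t - L - 1) ^ 2 + yL L := by
  rw [phiL, if_neg ht.not_ge, if_pos ht']

lemma phiL_self (L : ℝ) : phiL L L = xL L * (L - L - 1) ^ 2 + yL L := by
  rcases eq_or_ne (1 + L) 0 with h | h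
  · simp [phiL_of_le le_rfl, yL, xL, h]
  · rw [phiL_of_le le_rfl, yL, xL, ← Real.sqrt_div_self']
    field_simp
    ring

lemma phiL_of_mem_Icc {t : ℝ} (ht : t ∈ Icc L (L + 1)) :
    phiL L t = xL L * (t - L - 1) ^ 2 + yL L := by
  rcases ht.1.eq_or_lt with rfl | h
  · exact phiL_self _
  · exact phiL_of_le_of_lt h ht.2

lemma phiL_of_add_one_le {t : ℝ} (ht : L + 1 ≤ t) : phiL L t = yL L := by
  rcases ht.eq_or_lt with rfl | h
  · rw [phiL_of_le_of_lt (by linarith) le_rfl]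
    ring
  · rw [phiL, if_neg (by linarith), if_neg h.not_ge]

lemma phiL_pos (hL : -3 / 4 < L) {t : ℝ} (ht : -1 < t) : 0 < phiL L t := by
  have := xL_pos (L := L) (by linarith)
  have := yL_pos hL
  unfold phiL
  split_ifs
  · have : 0 < 1 + t := by linarith
    positivity
  · positivity
  · assumption

lemma strictMonoOn_div_one_add : StrictMonoOn (fun u : ℝ => u / (1 + u)) (Ioi (-1)) := by
  intro u hu v hv huv
  rw [mem_Ioi] at hu hv
  rw [div_lt_div_iff₀ (by linarith) (by linarith)]
  linarith

lemma hasDerivAt_sq_add_sq_mul (a c u : ℝ) :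
    HasDerivAt (fun u : ℝ => ((u - a) ^ 2 + c) ^ 2 * u)
      (((u - a) ^ 2 + c) * (4 * (u - a) * u + (u - a) ^ 2 + c)) u := by
  refine (((((hasDerivAt_id' u).sub_const a).fun_pow 2).add_const c).fun_pow 2 |>.fun_mul
    (hasDerivAt_id' u)).congr_deriv ?_
  ring

lemma strictMonoOn_sq_add_sq_mul (hL : 0 ≤ L) :
    StrictMonoOn (fun u : ℝ => ((u - (L + 1)) ^ 2 + (4 * L + 3)) ^ 2 * u) (Icc L (L + 1)) := by
  refine strictMonoOn_of_deriv_pos (convex_Icc _ _)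
    (fun u _ => (hasDerivAt_sq_add_sq_mul _ _ u).continuousAt.continuousWithinAt) ?_
  intro u hu
  rw [interior_Icc] at hu
  rw [(hasDerivAt_sq_add_sq_mul _ _ u).deriv]
  obtain ⟨s, hs1, rfl⟩ : ∃ s, s < 1 ∧ u = L + 1 - s := ⟨L + 1 - u, by linarith [hu.1], by ring⟩
  have h₁ : 0 < s ^ 2 + (4 * L + 3) := by positivity
  have h₂ : 0 < 5 * s ^ 2 - 4 * s + 3 + 4 * L * (1 - s) := by
    nlinarith [sq_nonneg (5 * s - 2), mul_nonneg hL (by linarith : (0 : ℝ) ≤ 1 - s)]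
  exact (mul_pos h₁ h₂).trans_eq (by ring)

lemma strictMonoOn_phiL_sq_mul (hL : 0 ≤ L) :
    StrictMonoOn (fun u => phiL L u ^ 2 * u) (Ici 0) := by
  have hx := xL_pos (L := L) (by linarith)
  have hy := yL_pos (L := L) (by linarith)
  have h₁ : StrictMonoOn (fun u => phiL L u ^ 2 * u) (Icc 0 L) := by
    refine (strictMonoOn_div_one_add.mono fun u hu => ?_).congr fun u hu => ?_
    · exact mem_Ioi.2 (by linarith [hu.1])
    · rw [phiL_of_le hu.2, div_pow, Real.sq_sqrt (by linarith [hu.1])]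
      ring
  have h₂ : StrictMonoOn (fun u => phiL L u ^ 2 * u) (Icc L (L + 1)) := by
    refine ((strictMono_mul_left_of_pos (pow_pos hx 2)).comp_strictMonoOn
      (strictMonoOn_sq_add_sq_mul hL)).congr fun u hu => ?_
    rw [phiL_of_mem_Icc hu, yL, Function.comp_apply]
    ring
  have h₃ : StrictMonoOn (fun u => phiL L u ^ 2 * u) (Ici (L + 1)) := by
    refine (strictMono_mul_left_of_pos (pow_pos hy 2)).strictMonoOn _ |>.congr fun u hu => ?_
    rw [phiL_of_add_one_le hu]
  have h₁₂ : StrictMonoOn (fun u => phiL L u ^ 2 * u) (Icc 0 (L + 1)) := by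
    rw [← Icc_union_Icc_eq_Icc hL (by linarith)]
    exact h₁.union h₂ (isGreatest_Icc hL) (isLeast_Icc (by linarith))
  rw [← Icc_union_Ici_eq_Ici (by linarith : (0 : ℝ) ≤ L + 1)]
  exact h₁₂.union h₃ (isGreatest_Icc (by linarith)) isLeast_Ici

theorem stmt_3 (L : ℝ) (hL : 0 < L) :
    StrictMonoOn (fun t : ℝ => phiL L (t ^ 2) * t) (Set.Ioi 0) := by
  intro a ha b hb hab
  have hsq : (phiL L (a ^ 2) * a) ^ 2 < (phiL L (b ^ 2) * b) ^ 2 := by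
    simpa only [mul_pow] using strictMonoOn_phiL_sq_mul hL.le (sq_nonneg a) (sq_nonneg b)
      (pow_lt_pow_left₀ hab (le_of_lt ha) two_ne_zero)
  have hb' : 0 ≤ phiL L (b ^ 2) * b :=
    mul_nonneg (phiL_pos (by linarith) (by linarith [sq_nonneg b])).le (le_of_lt hb)
  exact lt_of_pow_lt_pow_left₀ 2 hb' hsq
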